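/- arXiv:2412.20869 — 4 statements merged into one kernel-verified Lean document; each statement's English description precedes it below -/
import Mathlib

section
/- For positive integers n and d_1,…,d_r, the coefficient of z^n in (1+z)^{n+1} ∏_{i=1}^r (d_i z)/(1+d_i z) equals the coefficient of z^n in (1/(1−z)^2) ∏_{i=1}^r (d_i z)/(1+(d_i−1)z). -/
open PowerSeries

noncomputable section
namespace Hirz

abbrev s : PowerSeries ℚ := PowerSeries.X * (1 - PowerSeries.X)⁻¹

lemma const_one_sub : constantCoeff (R := ℚ) (1 - X) = 1 := by simp

lemma one_sub_ne : (1 - X : PowerSeries ℚ) ≠ 0 := by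
  intro h
  have := const_one_sub
  rw [h] at this; simp at this

lemma cancel : (1 - X : PowerSeries ℚ) * (1 - X)⁻¹ = 1 :=
  PowerSeries.mul_inv_cancel _ (by rw [const_one_sub]; norm_num)

lemma hs1 : (1 : PowerSeries ℚ) + s = (1 - X)⁻¹ := by
  have : ((1 : PowerSeries ℚ) + s) * (1 - X) = 1 := by
    have h : s * (1 - X) = X := by
      show X * (1-X)⁻¹ * (1 - X) = X
      rw [mul_assoc, mul_comm ((1-X:PowerSeries ℚ))⁻¹ _, cancel, mul_one]
    rw [add_mul, h, one_mul]
    ring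
  calc (1 : PowerSeries ℚ) + s = ((1+s) * (1-X)) * (1-X)⁻¹ := by
        rw [mul_assoc, cancel, mul_one]
    _ = (1-X)⁻¹ := by rw [this, one_mul]


lemma s_mul : s * (1 - X) = X := by
  show X * (1-X)⁻¹ * (1 - X) = X
  rw [mul_assoc, mul_comm ((1-X:PowerSeries ℚ))⁻¹ _, cancel, mul_one]

lemma hsc (c : ℚ) : (1 : PowerSeries ℚ) + C (R := ℚ) c * s = (1 + C (R := ℚ) (c - 1) * X) * (1 - X)⁻¹ := by
  have h1 : ((1 : PowerSeries ℚ) + C (R := ℚ) c * s) * (1 - X) = 1 + C (R := ℚ) (c-1) * X := by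
    rw [add_mul, mul_assoc, s_mul, one_mul, map_sub, map_one]
    ring
  have h2 : ((1 + C (R := ℚ) (c-1) * X) * (1 - X)⁻¹) * (1 - X) = 1 + C (R := ℚ) (c-1) * X := by
    rw [mul_assoc, mul_comm ((1-X:PowerSeries ℚ))⁻¹ _, cancel, mul_one]
  exact mul_right_cancel₀ one_sub_ne (h1.trans h2.symm)

/-- pow cancellation -/
lemma pow_cancel (m : ℕ) : (1 - X : PowerSeries ℚ)^m * ((1 - X)⁻¹)^m = 1 := by
  rw [← mul_pow, cancel, one_pow]

lemma coe_one_sub : ((1 - Polynomial.X : Polynomial ℚ) : PowerSeries ℚ) = 1 - X := by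
  rw [Polynomial.coe_sub, Polynomial.coe_one, Polynomial.coe_X]

lemma sl_lt (n j : ℕ) (hj : j < n) :
    coeff (R := ℚ) n ((1 - X : PowerSeries ℚ)^(n-1) * s^j) = 0 := by
  have hsplit : (1 - X : PowerSeries ℚ)^(n-1) = (1-X)^(n-1-j) * (1-X)^j := by
    rw [← pow_add]; congr 1; omega
  have key : (1 - X : PowerSeries ℚ)^(n-1) * s^j = X^j * (1-X)^(n-1-j) := by
    show (1 - X : PowerSeries ℚ)^(n-1) * (X * (1-X)⁻¹)^j = _
    rw [mul_pow, hsplit]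
    calc (1-X:PowerSeries ℚ)^(n-1-j) * (1-X)^j * (X^j * ((1-X)⁻¹)^j)
        = X^j * ((1-X:PowerSeries ℚ)^(n-1-j) * ((1-X)^j * ((1-X)⁻¹)^j)) := by ring
      _ = X^j * (1-X)^(n-1-j) := by rw [pow_cancel, mul_one]
  obtain ⟨k, rfl⟩ : ∃ k, n = k + j := ⟨n - j, by omega⟩
  set m := k + j - 1 - j with hm
  rw [key, coeff_X_pow_mul]
  have hk : m < k := by omega
  rw [← coe_one_sub, ← Polynomial.coe_pow, Polynomial.coeff_coe]
  apply Polynomial.coeff_eq_zero_of_natDegree_lt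
  calc ((1 - Polynomial.X : Polynomial ℚ)^m).natDegree
      ≤ m * (1 - Polynomial.X : Polynomial ℚ).natDegree := Polynomial.natDegree_pow_le
    _ ≤ m * 1 := by
        apply Nat.mul_le_mul_left
        rw [show (1 - Polynomial.X : Polynomial ℚ) = -(Polynomial.X - Polynomial.C 1) by rw [Polynomial.C_1]; ring,
          Polynomial.natDegree_neg, Polynomial.natDegree_X_sub_C]
    _ < k := by omega

lemma sl_eq (n : ℕ) (hn : 0 < n) :
    coeff (R := ℚ) n ((1 - X : PowerSeries ℚ)^(n-1) * s^n) = 1 := by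
  have : (1 - X : PowerSeries ℚ)^(n-1) * s^n = X^n * (1-X)⁻¹ := by
    show (1 - X : PowerSeries ℚ)^(n-1) * (X * (1-X)⁻¹)^n = _
    have hn' : n = (n-1) + 1 := by omega
    rw [mul_pow]
    calc (1-X:PowerSeries ℚ)^(n-1) * (X^n * ((1-X)⁻¹)^n)
        = X^n * ((1-X:PowerSeries ℚ)^(n-1) * ((1-X)⁻¹)^n) := by ring
      _ = X^n * ((1-X:PowerSeries ℚ)^(n-1) * (((1-X)⁻¹)^(n-1) * (1-X)⁻¹)) := by
          rw [← pow_succ, ← hn']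
      _ = X^n * (1-X)⁻¹ := by rw [← mul_assoc ((1-X:PowerSeries ℚ)^(n-1)), pow_cancel, one_mul]
  rw [this]
  have := coeff_X_pow_mul ((1 - X : PowerSeries ℚ)⁻¹) n 0
  rw [zero_add] at this
  rw [this, coeff_zero_eq_constantCoeff, PowerSeries.constantCoeff_inv, const_one_sub]
  norm_num


lemma coeff_zero_of_dvd {n : ℕ} {H : PowerSeries ℚ} (h : (X : PowerSeries ℚ)^(n+1) ∣ H) :
    coeff (R := ℚ) n H = 0 :=
  (PowerSeries.X_pow_dvd_iff.mp h) n (Nat.lt_succ_self n)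

lemma constCoeff_aeval (q : Polynomial ℚ) :
    constantCoeff (R := ℚ) (Polynomial.aeval s q) = q.coeff 0 := by
  rw [Polynomial.aeval_eq_sum_range, map_sum]
  have hs0 : constantCoeff (R := ℚ) s = 0 := by
    show constantCoeff (R := ℚ) (X * (1-X)⁻¹) = 0
    rw [map_mul, constantCoeff_X, zero_mul]
  rw [Finset.sum_eq_single 0]
  · simp
  · intro i hi hne
    rw [smul_eq_C_mul, map_mul, map_pow, hs0, zero_pow hne, mul_zero]
  · intro h
    simp at h

lemma key (n : ℕ) (hn : 0 < n) (p q : Polynomial ℚ) (hq : q.coeff 0 = 1)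
    (F G : PowerSeries ℚ)
    (h1 : F * (q : PowerSeries ℚ) = (p : PowerSeries ℚ))
    (h2 : G * Polynomial.aeval s q = Polynomial.aeval s p) :
    coeff (R := ℚ) n F = coeff (R := ℚ) n ((1 - X : PowerSeries ℚ)^(n-1) * G) := by
  set T : Polynomial ℚ := trunc (n+1) F with hT
  -- Step A : polynomial divisibility
  have hdvdA : (Polynomial.X : Polynomial ℚ)^(n+1) ∣ T * q - p := by
    rw [Polynomial.X_pow_dvd_iff]
    intro d hd
    have hpc : p.coeff d = PowerSeries.coeff (R := ℚ) d (F * (q : PowerSeries ℚ)) := by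
      rw [h1, Polynomial.coeff_coe]
    rw [Polynomial.coeff_sub, Polynomial.coeff_mul, hpc, PowerSeries.coeff_mul, sub_eq_zero]
    apply Finset.sum_congr rfl
    rintro ⟨a, b⟩ hab
    have ha : a < n + 1 := by
      have := Finset.HasAntidiagonal.antidiagonal.fst_le hab
      simp at this ⊢; omega
    rw [hT, coeff_trunc, if_pos ha, Polynomial.coeff_coe]
  obtain ⟨h, hh⟩ := hdvdA
  -- Step B/C : power series divisibility after aeval
  have hdvdB : (X : PowerSeries ℚ)^(n+1) ∣ (Polynomial.aeval s T - G) * Polynomial.aeval s q := by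
    have e : (Polynomial.aeval s T - G) * Polynomial.aeval s q
        = s^(n+1) * Polynomial.aeval s h := by
      rw [sub_mul, h2, ← map_mul, ← map_sub, hh, map_mul, map_pow, Polynomial.aeval_X]
    rw [e]
    have : (s : PowerSeries ℚ)^(n+1) = X^(n+1) * ((1-X)⁻¹)^(n+1) := by
      show (X * (1-X)⁻¹ : PowerSeries ℚ)^(n+1) = _
      rw [mul_pow]
    rw [this, mul_assoc]
    exact Dvd.intro _ rfl
  -- Step D/E : cancel the unit aeval s q
  have hqs : Polynomial.aeval s q * (Polynomial.aeval s q)⁻¹ = 1 := by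
    apply PowerSeries.mul_inv_cancel
    rw [constCoeff_aeval, hq]; norm_num
  have hdvdC : (X : PowerSeries ℚ)^(n+1) ∣ (Polynomial.aeval s T - G) := by
    have := hdvdB.mul_right (Polynomial.aeval s q)⁻¹
    rwa [mul_assoc, hqs, mul_one] at this
  -- Step F
  have hF : coeff (R := ℚ) n ((1 - X : PowerSeries ℚ)^(n-1) * G)
      = coeff (R := ℚ) n ((1 - X : PowerSeries ℚ)^(n-1) * Polynomial.aeval s T) := by
    have : (X : PowerSeries ℚ)^(n+1) ∣
        ((1 - X : PowerSeries ℚ)^(n-1) * Polynomial.aeval s T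
          - (1 - X : PowerSeries ℚ)^(n-1) * G) := by
      rw [← mul_sub]
      exact hdvdC.mul_left _
    have h0 := coeff_zero_of_dvd this
    rw [map_sub] at h0
    linarith
  rw [hF]
  -- Step G
  have hdeg : T.natDegree < n + 1 := natDegree_trunc_lt F n
  rw [Polynomial.aeval_eq_sum_range' hdeg, Finset.mul_sum, map_sum]
  rw [Finset.sum_eq_single n]
  · rw [mul_smul_comm, map_smul, sl_eq n hn, smul_eq_mul, mul_one, hT, coeff_trunc,
      if_pos (Nat.lt_succ_self n)]
  · intro i hi hne
    have hi' : i < n := by simp at hi; omega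
    rw [mul_smul_comm, map_smul, sl_lt n i hi', smul_zero]
  · intro hmem
    simp at hmem

lemma coe_nat (m : ℕ) : ((m : Polynomial ℚ) : PowerSeries ℚ) = (m : PowerSeries ℚ) := by
  rw [← Polynomial.coeToPowerSeries.ringHom_apply, map_natCast]

lemma hconst (c : ℚ) : constantCoeff (R := ℚ) (1 + C (R := ℚ) c * X) = 1 := by simp

lemma hcancel (c : ℚ) : (1 + C (R := ℚ) c * X)⁻¹ * (1 + C (R := ℚ) c * X) = 1 := by
  rw [mul_comm]
  exact PowerSeries.mul_inv_cancel _ (by rw [hconst]; norm_num)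

lemma algC (c : ℚ) : (algebraMap ℚ (PowerSeries ℚ)) c = C (R := ℚ) c := by
  rw [PowerSeries.algebraMap_apply]
  simp

end Hirz
end

open Hirz

/-- For positive integers `n` and `d_1,…,d_r`, the coefficient of `z^n` in
`(1+z)^{n+1} ∏_{i=1}^r (d_i z)/(1+d_i z)` equals the coefficient of `z^n` in
`(1/(1−z)^2) ∏_{i=1}^r (d_i z)/(1+(d_i−1)z)`, both expanded as formal power series at `0`. -/
theorem coeff_hirzebruch_identity (n : ℕ) (hn : 0 < n) (r : ℕ) (d : Fin r → ℕ)
    (hd : ∀ i, 0 < d i) :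
    PowerSeries.coeff (R := ℚ) n
      ((1 + PowerSeries.X : PowerSeries ℚ) ^ (n + 1) *
        ∏ i : Fin r, (PowerSeries.C (R := ℚ) (d i) * PowerSeries.X) *
          (1 + PowerSeries.C (R := ℚ) (d i) * PowerSeries.X)⁻¹)
    = PowerSeries.coeff (R := ℚ) n
      ((((1 - PowerSeries.X : PowerSeries ℚ))⁻¹) ^ 2 *
        ∏ i : Fin r, (PowerSeries.C (R := ℚ) (d i) * PowerSeries.X) *
          (1 + PowerSeries.C (R := ℚ) ((d i : ℚ) - 1) * PowerSeries.X)⁻¹) := by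
  classical
  set q : Polynomial ℚ := ∏ i : Fin r, (1 + Polynomial.C ((d i : ℚ)) * Polynomial.X) with hqdef
  set p : Polynomial ℚ := (1 + Polynomial.X)^(n+1) *
    ∏ i : Fin r, (Polynomial.C ((d i : ℚ)) * Polynomial.X) with hpdef
  set F : PowerSeries ℚ := (1 + X)^(n+1) *
    ∏ i : Fin r, (C (R := ℚ) (d i) * X) * (1 + C (R := ℚ) (d i) * X)⁻¹ with hF
  set G : PowerSeries ℚ := ((1-X)⁻¹)^(n+1) *
    ∏ i : Fin r, (C (R := ℚ) (d i) * X) * (1 + C (R := ℚ) ((d i : ℚ) - 1) * X)⁻¹ with hG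
  have hq0 : q.coeff 0 = 1 := by
    rw [Polynomial.coeff_zero_eq_eval_zero, hqdef, Polynomial.eval_prod]
    apply Finset.prod_eq_one
    intro i _
    simp
  have hcoeq : (q : PowerSeries ℚ) = ∏ i : Fin r, (1 + C (R := ℚ) ((d i : ℚ)) * X) := by
    rw [hqdef, ← Polynomial.coeToPowerSeries.ringHom_apply, map_prod]
    apply Finset.prod_congr rfl
    intro i _
    simp [coe_nat]
  have h1 : F * (q : PowerSeries ℚ) = (p : PowerSeries ℚ) := by
    rw [hcoeq, hF, mul_assoc, ← Finset.prod_mul_distrib]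
    have e : (∏ i : Fin r, ((C (R := ℚ) (d i) * X) * (1 + C (R := ℚ) (d i) * X)⁻¹ * (1 + C (R := ℚ) ((d i : ℚ)) * X)))
        = ∏ i : Fin r, (C (R := ℚ) (d i) * X) := by
      apply Finset.prod_congr rfl
      intro i _
      rw [mul_assoc, hcancel, mul_one]
    rw [e, hpdef, ← Polynomial.coeToPowerSeries.ringHom_apply, map_mul, map_pow, map_prod]
    simp [coe_nat]
  have haq : Polynomial.aeval s q = ∏ i : Fin r, ((1 + C (R := ℚ) ((d i:ℚ) - 1) * X) * (1-X)⁻¹) := by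
    rw [hqdef, map_prod]
    apply Finset.prod_congr rfl
    intro i _
    rw [map_add, map_one, map_mul, Polynomial.aeval_C, Polynomial.aeval_X, algC]
    exact hsc _
  have hap : Polynomial.aeval s p = ((1-X)⁻¹)^(n+1) * ∏ i : Fin r, (C (R := ℚ) (d i) * X * (1-X)⁻¹) := by
    rw [hpdef, map_mul, map_pow, map_add, map_one, Polynomial.aeval_X, hs1, map_prod]
    congr 1
    apply Finset.prod_congr rfl
    intro i _
    rw [map_mul, Polynomial.aeval_C, Polynomial.aeval_X, algC]
    show C (R := ℚ) ((d i : ℚ)) * (X * (1-X)⁻¹) = _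
    rw [mul_assoc]
  have h2 : G * Polynomial.aeval s q = Polynomial.aeval s p := by
    rw [haq, hap, hG, mul_assoc, ← Finset.prod_mul_distrib]
    congr 1
    apply Finset.prod_congr rfl
    intro i _
    calc (C (R := ℚ) (d i) * X) * (1 + C (R := ℚ) ((d i : ℚ) - 1) * X)⁻¹ * ((1 + C (R := ℚ) ((d i:ℚ) - 1) * X) * (1-X)⁻¹)
        = (C (R := ℚ) (d i) * X) * ((1 + C (R := ℚ) ((d i : ℚ) - 1) * X)⁻¹ * (1 + C (R := ℚ) ((d i:ℚ) - 1) * X)) * (1-X)⁻¹ := by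
          ring
      _ = C (R := ℚ) (d i) * X * (1-X)⁻¹ := by rw [hcancel, mul_one]
  have hkey := Hirz.key n hn p q hq0 F G h1 h2
  have hfin : (1 - X : PowerSeries ℚ)^(n-1) * G
      = ((1-X)⁻¹)^2 * ∏ i : Fin r, (C (R := ℚ) (d i) * X) * (1 + C (R := ℚ) ((d i : ℚ) - 1) * X)⁻¹ := by
    rw [hG, ← mul_assoc]
    congr 1
    have e : ((1-X:PowerSeries ℚ)⁻¹)^(n+1) = ((1-X)⁻¹)^(n-1) * ((1-X)⁻¹)^2 := by
      rw [← pow_add]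
      congr 1
      omega
    rw [e, ← mul_assoc, pow_cancel, one_mul]
  rw [hkey, hfin]
end

section
/- For natural numbers n, i with i ≤ n, and positive integers d_1,…,d_r, the coefficient of z^{n−i} in (∏_{j=1}^r 1/(1+d_j z)) · (1+z)^{n−i} equals the coefficient of z^{n−i} in (1/(1−z)) · ∏_{j=1}^r (1−z)/(1+(d_j−1)z). -/
open PowerSeries Finset

noncomputable section CsmAux

/-- The substitution target `X/(1-X)`. -/
def csmW : PowerSeries ℚ := PowerSeries.X * (1 - PowerSeries.X)⁻¹

lemma csm_one_sub_ne : constantCoeff (1 - PowerSeries.X : PowerSeries ℚ) ≠ 0 := by simp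

lemma csm_coeff_w_pow_zero {m k : ℕ} (h : m < k) : coeff m (csmW ^ k) = 0 := by
  rw [csmW, mul_pow, coeff_X_pow_mul', if_neg (by omega)]

/-- Coefficientwise substitution `f ↦ f(X/(1-X))`. -/
def csmS (f : PowerSeries ℚ) : PowerSeries ℚ :=
  PowerSeries.mk fun m => ∑ k ∈ Finset.range (m + 1), coeff k f * coeff m (csmW ^ k)

lemma csmS_coeff (f : PowerSeries ℚ) (m : ℕ) :
    coeff m (csmS f) = ∑ k ∈ Finset.range (m + 1), coeff k f * coeff m (csmW ^ k) :=
  coeff_mk _ _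

lemma csmS_coeff_ext (f : PowerSeries ℚ) {m M : ℕ} (h : m ≤ M) :
    coeff m (csmS f) = ∑ k ∈ Finset.range (M + 1), coeff k f * coeff m (csmW ^ k) := by
  rw [csmS_coeff]
  refine Finset.sum_subset (by intro x hx; simp only [mem_range] at *; omega) ?_
  intro x hx hx2
  simp only [mem_range] at hx hx2
  rw [csm_coeff_w_pow_zero (by omega), mul_zero]

lemma csm_sum_antidiag (m : ℕ) (F : ℕ × ℕ → ℚ) (hF : ∀ p : ℕ × ℕ, m < p.1 + p.2 → F p = 0) :
    ∑ k ∈ Finset.range (m + 1), ∑ p ∈ Finset.HasAntidiagonal.antidiagonal k, F p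
      = ∑ p ∈ Finset.range (m + 1) ×ˢ Finset.range (m + 1), F p := by
  have h1 : ∑ p ∈ Finset.range (m + 1) ×ˢ Finset.range (m + 1), F p
      = ∑ p ∈ (Finset.range (m + 1) ×ˢ Finset.range (m + 1)).filter
          (fun p => p.1 + p.2 ≤ m), F p := by
    refine (Finset.sum_subset (Finset.filter_subset _ _) ?_).symm
    intro p hp hp2
    simp only [mem_filter, mem_product, mem_range] at hp hp2
    exact hF p (by omega)
  rw [h1, ← Finset.sum_sigma (Finset.range (m + 1)) (fun k => Finset.HasAntidiagonal.antidiagonal k)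
    (fun x => F x.2)]
  refine Finset.sum_nbij' (fun x => x.2) (fun p => ⟨p.1 + p.2, p⟩) ?_ ?_ ?_ ?_ ?_
  · rintro ⟨k, p⟩ ha
    simp only [Finset.mem_sigma, mem_range, Finset.HasAntidiagonal.mem_antidiagonal] at ha
    simp only [mem_filter, mem_product, mem_range]
    omega
  · intro p hp
    simp only [mem_filter, mem_product, mem_range] at hp
    simp only [Finset.mem_sigma, mem_range, Finset.HasAntidiagonal.mem_antidiagonal]
    exact ⟨by omega, trivial⟩
  · rintro ⟨k, p⟩ ha
    simp only [Finset.mem_sigma, mem_range, Finset.HasAntidiagonal.mem_antidiagonal] at ha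
    simp [ha.2]
  · intro p hp; rfl
  · intro a ha; rfl

lemma csmS_mul (f g : PowerSeries ℚ) : csmS (f * g) = csmS f * csmS g := by
  ext m
  have key : ∀ u v : ℕ, coeff m (csmW ^ (u + v))
      = ∑ p ∈ Finset.HasAntidiagonal.antidiagonal m, coeff p.1 (csmW ^ u) * coeff p.2 (csmW ^ v) := by
    intro u v
    rw [pow_add, coeff_mul]
  calc coeff m (csmS (f * g))
      = ∑ k ∈ Finset.range (m + 1), ∑ p ∈ Finset.HasAntidiagonal.antidiagonal k,
          coeff p.1 f * coeff p.2 g * coeff m (csmW ^ (p.1 + p.2)) := by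
        rw [csmS_coeff]
        refine Finset.sum_congr rfl fun k hk => ?_
        rw [coeff_mul, Finset.sum_mul]
        refine Finset.sum_congr rfl fun p hp => ?_
        rw [Finset.HasAntidiagonal.mem_antidiagonal.mp hp]
    _ = ∑ q ∈ Finset.range (m + 1) ×ˢ Finset.range (m + 1),
          coeff q.1 f * coeff q.2 g * coeff m (csmW ^ (q.1 + q.2)) := by
        refine csm_sum_antidiag m _ fun p hp => ?_
        rw [csm_coeff_w_pow_zero hp, mul_zero]
    _ = ∑ q ∈ Finset.range (m + 1) ×ˢ Finset.range (m + 1),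
          coeff q.1 f * coeff q.2 g *
            ∑ p ∈ Finset.HasAntidiagonal.antidiagonal m, coeff p.1 (csmW ^ q.1) * coeff p.2 (csmW ^ q.2) := by
        refine Finset.sum_congr rfl fun q _ => by rw [key]
    _ = ∑ p ∈ Finset.HasAntidiagonal.antidiagonal m, ∑ q ∈ Finset.range (m + 1) ×ˢ Finset.range (m + 1),
          (coeff q.1 f * coeff p.1 (csmW ^ q.1)) *
            (coeff q.2 g * coeff p.2 (csmW ^ q.2)) := by
        rw [Finset.sum_comm]
        refine Finset.sum_congr rfl fun q _ => ?_
        rw [Finset.mul_sum]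
        exact Finset.sum_congr rfl fun p _ => by ring
    _ = ∑ p ∈ Finset.HasAntidiagonal.antidiagonal m, coeff p.1 (csmS f) * coeff p.2 (csmS g) := by
        refine Finset.sum_congr rfl fun p hp => ?_
        have hp' := Finset.HasAntidiagonal.mem_antidiagonal.mp hp
        rw [csmS_coeff_ext f (show p.1 ≤ m by omega), csmS_coeff_ext g (show p.2 ≤ m by omega),
          Finset.sum_mul_sum, Finset.sum_product]
    _ = coeff m (csmS f * csmS g) := (coeff_mul _ _ _).symm

lemma csmS_C (a : ℚ) : csmS (PowerSeries.C a) = PowerSeries.C a := by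
  ext m
  rw [csmS_coeff]
  simp only [coeff_C, ite_mul, zero_mul]
  rw [Finset.sum_ite_eq' (Finset.range (m + 1)) 0]
  simp [pow_zero]

lemma csmS_one : csmS 1 = 1 := by
  have := csmS_C 1; rwa [map_one] at this

lemma csmS_X : csmS PowerSeries.X = csmW := by
  ext m
  rw [csmS_coeff]
  simp only [coeff_X, ite_mul, zero_mul, one_mul]
  rw [Finset.sum_ite_eq' (Finset.range (m + 1)) 1]
  by_cases hm : 1 ∈ Finset.range (m + 1)
  · rw [if_pos hm, pow_one]
  · rw [if_neg hm]
    simp only [mem_range] at hm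
    have hm0 : m = 0 := by omega
    subst hm0
    have := csm_coeff_w_pow_zero (m := 0) (k := 1) (by omega)
    rw [pow_one] at this
    rw [this]

lemma csmS_add (f g : PowerSeries ℚ) : csmS (f + g) = csmS f + csmS g := by
  ext m
  simp only [csmS_coeff, map_add, add_mul, Finset.sum_add_distrib]

lemma csmS_one_add (c : ℚ) :
    csmS (1 + PowerSeries.C c * PowerSeries.X) = 1 + PowerSeries.C c * csmW := by
  rw [csmS_add, csmS_one, csmS_mul, csmS_C, csmS_X]

lemma csmS_factor (c : ℚ) :
    csmS ((1 + PowerSeries.C c * PowerSeries.X)⁻¹)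
      = (1 - PowerSeries.X) * (1 + PowerSeries.C (c - 1) * PowerSeries.X)⁻¹ := by
  have h1 : constantCoeff (1 + PowerSeries.C c * PowerSeries.X) ≠ 0 := by simp
  have h2 : constantCoeff (1 + PowerSeries.C (c - 1) * PowerSeries.X) ≠ 0 := by simp
  have hu : (1 - PowerSeries.X : PowerSeries ℚ)⁻¹ * (1 - PowerSeries.X) = 1 :=
    PowerSeries.inv_mul_cancel _ csm_one_sub_ne
  have key : (1 + PowerSeries.C c * csmW) * (1 - PowerSeries.X)
      = 1 + PowerSeries.C (c - 1) * PowerSeries.X := by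
    calc (1 + PowerSeries.C c * csmW) * (1 - PowerSeries.X)
        = (1 - PowerSeries.X) + PowerSeries.C c * PowerSeries.X *
            ((1 - PowerSeries.X)⁻¹ * (1 - PowerSeries.X)) := by rw [csmW]; ring
      _ = 1 + PowerSeries.C (c - 1) * PowerSeries.X := by
          rw [hu, mul_one, map_sub, map_one]; ring
  set T : PowerSeries ℚ :=
    (1 - PowerSeries.X) * (1 + PowerSeries.C (c - 1) * PowerSeries.X)⁻¹ with hT
  have hmul : (1 + PowerSeries.C c * csmW) * T = 1 := by
    calc (1 + PowerSeries.C c * csmW) * T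
        = ((1 + PowerSeries.C c * csmW) * (1 - PowerSeries.X)) *
            (1 + PowerSeries.C (c - 1) * PowerSeries.X)⁻¹ := by rw [hT]; ring
      _ = 1 := by rw [key, PowerSeries.mul_inv_cancel _ h2]
  have hS : (1 + PowerSeries.C c * csmW) *
      csmS ((1 + PowerSeries.C c * PowerSeries.X)⁻¹) = 1 := by
    rw [← csmS_one_add, ← csmS_mul, PowerSeries.mul_inv_cancel _ h1, csmS_one]
  calc csmS ((1 + PowerSeries.C c * PowerSeries.X)⁻¹)
      = (T * (1 + PowerSeries.C c * csmW)) *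
          csmS ((1 + PowerSeries.C c * PowerSeries.X)⁻¹) := by
        rw [mul_comm T, hmul, one_mul]
    _ = T * ((1 + PowerSeries.C c * csmW) *
          csmS ((1 + PowerSeries.C c * PowerSeries.X)⁻¹)) := by ring
    _ = T := by rw [hS, mul_one]

/-- `csmS` bundled as a monoid hom. -/
def csmSM : PowerSeries ℚ →* PowerSeries ℚ where
  toFun := csmS
  map_one' := csmS_one
  map_mul' := csmS_mul

lemma csm_inv_one_sub : (1 - PowerSeries.X : PowerSeries ℚ)⁻¹ = PowerSeries.mk 1 :=
  (PowerSeries.inv_eq_iff_mul_eq_one csm_one_sub_ne).mpr (mk_one_mul_one_sub_eq_one ℚ)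

lemma csm_hW {m : ℕ} {k : ℕ} (hk : k ≤ m) :
    coeff m ((PowerSeries.mk 1 : PowerSeries ℚ) * csmW ^ k) = (m.choose k : ℚ) := by
  have hrw : (PowerSeries.mk 1 : PowerSeries ℚ) * csmW ^ k
      = PowerSeries.X ^ k * (PowerSeries.mk fun n => ((k + n).choose k : ℚ)) := by
    rw [csmW, mul_pow, csm_inv_one_sub, ← mk_one_pow_eq_mk_choose_add]
    ring
  rw [hrw, coeff_X_pow_mul', if_pos hk, coeff_mk, Nat.add_sub_cancel' hk]

lemma csm_main (f : PowerSeries ℚ) (m : ℕ) :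
    coeff m (f * (1 + PowerSeries.X) ^ m)
      = coeff m ((1 - PowerSeries.X)⁻¹ * csmS f) := by
  have hbin : ∀ k : ℕ, coeff k ((1 + PowerSeries.X : PowerSeries ℚ) ^ m)
      = (m.choose k : ℚ) := by
    intro k
    have hc : ((1 + Polynomial.X : Polynomial ℚ) : PowerSeries ℚ)
        = 1 + PowerSeries.X := by
      simp
    rw [← hc, ← Polynomial.coe_pow, Polynomial.coeff_coe, Polynomial.coeff_one_add_X_pow]
  calc coeff m (f * (1 + PowerSeries.X) ^ m)
      = ∑ k ∈ Finset.range (m + 1), coeff k f * (m.choose k : ℚ) := by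
        rw [coeff_mul, Finset.Nat.sum_antidiagonal_eq_sum_range_succ_mk]
        refine Finset.sum_congr rfl fun k hk => ?_
        simp only [mem_range] at hk
        rw [hbin, Nat.choose_symm (by omega)]
    _ = ∑ u ∈ Finset.range (m + 1), coeff u f *
          coeff m ((PowerSeries.mk 1 : PowerSeries ℚ) * csmW ^ u) := by
        refine Finset.sum_congr rfl fun u hu => ?_
        simp only [mem_range] at hu
        rw [csm_hW (by omega)]
    _ = ∑ u ∈ Finset.range (m + 1), ∑ k ∈ Finset.range (m + 1),
          coeff u f * coeff (m - k) (csmW ^ u) := by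
        refine Finset.sum_congr rfl fun u _ => ?_
        rw [coeff_mul, Finset.Nat.sum_antidiagonal_eq_sum_range_succ_mk, Finset.mul_sum]
        exact Finset.sum_congr rfl fun k _ => by rw [coeff_mk]; simp
    _ = ∑ k ∈ Finset.range (m + 1), coeff (m - k) (csmS f) := by
        rw [Finset.sum_comm]
        refine Finset.sum_congr rfl fun k hk => ?_
        simp only [mem_range] at hk
        rw [csmS_coeff_ext f (show m - k ≤ m by omega)]
    _ = coeff m ((1 - PowerSeries.X)⁻¹ * csmS f) := by
        rw [csm_inv_one_sub, coeff_mul, Finset.Nat.sum_antidiagonal_eq_sum_range_succ_mk]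
        exact (Finset.sum_congr rfl fun k _ => by rw [coeff_mk]; simp).symm

end CsmAux

/-- For `i ≤ n` and positive integers `d_1,…,d_r`, the coefficient of `z^{n−i}` in
`(∏_{j=1}^r 1/(1+d_j z)) · (1+z)^{n−i}` equals the coefficient of `z^{n−i}` in
`(1/(1−z)) · ∏_{j=1}^r (1−z)/(1+(d_j−1)z)`. -/
theorem coeff_csm_identity (n i : ℕ) (hin : i ≤ n) (r : ℕ) (d : Fin r → ℕ)
    (hd : ∀ j, 0 < d j) :
    PowerSeries.coeff (R := ℚ) (n - i)
      ((∏ j : Fin r, (1 + PowerSeries.C (R := ℚ) (d j) * PowerSeries.X : PowerSeries ℚ)⁻¹) *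
        (1 + PowerSeries.X) ^ (n - i))
    = PowerSeries.coeff (R := ℚ) (n - i)
      ((1 - PowerSeries.X : PowerSeries ℚ)⁻¹ *
        ∏ j : Fin r, (1 - PowerSeries.X) *
          (1 + PowerSeries.C (R := ℚ) ((d j : ℚ) - 1) * PowerSeries.X)⁻¹) := by
  rw [csm_main]
  congr 1
  have : csmS (∏ j : Fin r, (1 + PowerSeries.C (R := ℚ) (d j) * PowerSeries.X : PowerSeries ℚ)⁻¹)
      = ∏ j : Fin r, csmS ((1 + PowerSeries.C (R := ℚ) (d j) * PowerSeries.X : PowerSeries ℚ)⁻¹) :=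
    map_prod csmSM _ _
  rw [this]
  exact congrArg _ (Finset.prod_congr rfl fun j _ => csmS_factor ((d j : ℚ)))
end

section
/- Whitney's theorem: for a hyperplane arrangement A in an n-dimensional vector space, the characteristic polynomial satisfies χ_A(z) = ∑_{B ⊆ A, ∩B ≠ ∅} (−1)^{|B|} z^{dim ∩B}, where the empty subfamily contributes z^n. -/
open Polynomial Finset

attribute [local instance] Classical.propDecidable

/-- Whitney's theorem: for a finite arrangement `A` of affine hyperplanes in an
`n`-dimensional vector space `V = Kⁿ`, the characteristic polynomial
`χ_A(z) = ∑_{x ∈ L(A)} μ(x) z^{dim x}` (where `L(A)` is the intersection poset, ordered by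
reverse inclusion with minimum `V`, and `μ` is its Möbius function) satisfies
`χ_A(z) = ∑_{B ⊆ A, ∩B ≠ ∅} (−1)^{|B|} z^{dim ∩B}`, the empty subfamily contributing `z^n`. -/
theorem whitney_theorem (K : Type*) [Field K] (n : ℕ)
    (A : Finset (Set (Fin n → K)))
    (hA : ∀ H ∈ A, ∃ (φ : (Fin n → K) →ₗ[K] K) (c : K),
      φ ≠ 0 ∧ H = {x | φ x = c})
    -- intersection of a subfamily, as a set
    (inter : Finset (Set (Fin n → K)) → Set (Fin n → K))
    (hinter : ∀ B, inter B = ⋂₀ (↑B : Set (Set (Fin n → K))))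
    -- the intersection poset `L(A)`: all nonempty intersections of subfamilies
    (L : Finset (Set (Fin n → K)))
    (hL : L = (A.powerset.filter fun B => (inter B).Nonempty).image inter)
    -- the dimension of an element of the poset
    (dim : Set (Fin n → K) → ℕ)
    (hdim : ∀ S, dim S = Module.finrank K (affineSpan K S).direction)
    -- the Möbius function of `L(A)` (ordered by reverse inclusion, minimum `Set.univ`)
    (μ : Set (Fin n → K) → ℤ)
    (hμ₀ : μ Set.univ = 1)
    (hμ : ∀ x ∈ L, x ≠ Set.univ → ∑ z ∈ L.filter (fun z => x ⊆ z), μ z = 0) :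
    ∑ x ∈ L, μ x • (X : Polynomial ℤ) ^ (dim x)
      = ∑ B ∈ A.powerset.filter (fun B => (inter B).Nonempty),
          (-1 : ℤ) ^ B.card • (X : Polynomial ℤ) ^ (dim (inter B)) := by
  classical
  set Ls := A.powerset.filter (fun B => (inter B).Nonempty) with hLs
  have huniv_inter : inter ∅ = Set.univ := by rw [hinter]; simp
  have hunivL : Set.univ ∈ L := by
    rw [hL]
    refine Finset.mem_image.2 ⟨∅, ?_, huniv_inter⟩
    refine Finset.mem_filter.2 ⟨Finset.empty_mem_powerset _, ?_⟩
    rw [huniv_inter]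
    exact ⟨fun _ => 0, trivial⟩
  have hmemL : ∀ B ∈ Ls, inter B ∈ L := fun B hB => by
    rw [hL]; exact Finset.mem_image_of_mem _ hB
  have hLne : ∀ x ∈ L, x.Nonempty := by
    intro x hx
    rw [hL] at hx
    obtain ⟨B, hB, rfl⟩ := Finset.mem_image.1 hx
    exact (Finset.mem_filter.1 hB).2
  have hAne : Set.univ ∉ A := by
    intro hmem
    obtain ⟨φ, c, hφ, hH⟩ := hA _ hmem
    obtain ⟨v, hv⟩ : ∃ v, φ v ≠ 0 := by
      by_contra h
      push_neg at h
      exact hφ (LinearMap.ext h)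
    have h1 : ((c + 1) / φ v) • v ∈ (Set.univ : Set (Fin n → K)) := trivial
    rw [hH] at h1
    simp only [Set.mem_setOf_eq, map_smul, smul_eq_mul] at h1
    rw [div_mul_cancel₀ _ hv] at h1
    exact one_ne_zero (add_left_cancel (h1.trans (add_zero c).symm))
  set f : Set (Fin n → K) → ℤ :=
    fun x => ∑ B ∈ Ls.filter (fun B => inter B = x), (-1:ℤ)^B.card with hf
  have hRHS : ∑ B ∈ Ls, (-1:ℤ)^B.card • (X : Polynomial ℤ)^(dim (inter B))
      = ∑ x ∈ L, f x • (X : Polynomial ℤ)^(dim x) := by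
    rw [← Finset.sum_fiberwise_of_maps_to hmemL
      (fun B => (-1:ℤ)^B.card • (X : Polynomial ℤ)^(dim (inter B)))]
    refine Finset.sum_congr rfl fun x hx => ?_
    rw [hf, Finset.sum_smul]
    refine Finset.sum_congr rfl fun B hB => ?_
    rw [(Finset.mem_filter.1 hB).2]
  have stepμ : ∀ x ∈ L, ∑ z ∈ L.filter (fun z => x ⊆ z), μ z
      = if x = Set.univ then 1 else 0 := by
    intro x hx
    by_cases h : x = Set.univ
    · subst h
      have hone : L.filter (fun z => Set.univ ⊆ z) = {Set.univ} := by
        ext z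
        simp only [Finset.mem_filter, Finset.mem_singleton]
        constructor
        · rintro ⟨_, hz⟩; exact Set.univ_subset_iff.1 hz
        · rintro rfl; exact ⟨hunivL, subset_rfl⟩
      rw [hone]; simp [hμ₀]
    · rw [if_neg h]; exact hμ x hx h
  have stepf : ∀ x ∈ L, ∑ z ∈ L.filter (fun z => x ⊆ z), f z
      = if x = Set.univ then 1 else 0 := by
    intro x hx
    have hxne := hLne x hx
    have hmaps : ∀ B ∈ Ls.filter (fun B => x ⊆ inter B),
        inter B ∈ L.filter (fun z => x ⊆ z) := by
      intro B hB
      have hB' := Finset.mem_filter.1 hB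
      exact Finset.mem_filter.2 ⟨hmemL B hB'.1, hB'.2⟩
    have h1 : ∑ z ∈ L.filter (fun z => x ⊆ z), f z
        = ∑ B ∈ Ls.filter (fun B => x ⊆ inter B), (-1:ℤ)^B.card := by
      rw [← Finset.sum_fiberwise_of_maps_to hmaps (fun B => (-1:ℤ)^B.card)]
      refine Finset.sum_congr rfl fun z hz => ?_
      have hz' := (Finset.mem_filter.1 hz).2
      have hfeq : (Ls.filter (fun B => x ⊆ inter B)).filter (fun B => inter B = z)
          = Ls.filter (fun B => inter B = z) := by
        ext B
        simp only [Finset.mem_filter]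
        constructor
        · rintro ⟨⟨h1, _⟩, h2⟩; exact ⟨h1, h2⟩
        · rintro ⟨h1, h2⟩; exact ⟨⟨h1, by rw [h2]; exact hz'⟩, h2⟩
      rw [hfeq]
    have h2 : Ls.filter (fun B => x ⊆ inter B)
        = (A.filter (fun H => x ⊆ H)).powerset := by
      ext B
      simp only [hLs, Finset.mem_filter, Finset.mem_powerset]
      constructor
      · rintro ⟨⟨hBA, _⟩, hxB⟩
        intro H hH
        refine Finset.mem_filter.2 ⟨hBA hH, ?_⟩
        refine hxB.trans ?_
        rw [hinter]
        exact Set.sInter_subset_of_mem (by exact_mod_cast hH)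
      · intro hB
        have hBA : B ⊆ A := hB.trans (Finset.filter_subset _ _)
        have hxB : x ⊆ inter B := by
          rw [hinter]
          intro p hp
          refine Set.mem_sInter.2 ?_
          intro S hS
          have hS' : S ∈ B := by exact_mod_cast hS
          exact (Finset.mem_filter.1 (hB hS')).2 hp
        exact ⟨⟨hBA, hxne.mono hxB⟩, hxB⟩
    rw [h1, h2, Finset.sum_powerset_neg_one_pow_card]
    congr 1
    simp only [eq_iff_iff]
    constructor
    · intro hemp
      rw [hL] at hx
      obtain ⟨B, hB, rfl⟩ := Finset.mem_image.1 hx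
      have hBe : B = ∅ := by
        by_contra hne
        obtain ⟨H, hH⟩ := Finset.nonempty_of_ne_empty hne
        have hxH : inter B ⊆ H := by
          rw [hinter]
          exact Set.sInter_subset_of_mem (by exact_mod_cast hH)
        have : H ∈ A.filter (fun H => inter B ⊆ H) :=
          Finset.mem_filter.2 ⟨Finset.mem_powerset.1 (Finset.mem_filter.1 hB).1 hH, hxH⟩
        rw [hemp] at this
        exact absurd this (Finset.notMem_empty _)
      rw [hBe, huniv_inter]
    · intro hxu
      subst hxu
      rw [Finset.filter_eq_empty_iff]
      intro H hH hle
      exact hAne (Set.univ_subset_iff.1 hle ▸ hH)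
  have huniq : ∀ x ∈ L, f x = μ x := by
    set h : Set (Fin n → K) → ℤ := fun z => f z - μ z with hh
    have hsum : ∀ x ∈ L, ∑ z ∈ L.filter (fun z => x ⊆ z), h z = 0 := by
      intro x hx
      simp only [hh, Finset.sum_sub_distrib, stepμ x hx, stepf x hx, sub_self]
    have key : ∀ k : ℕ, ∀ x ∈ L, (L.filter (fun z => x ⊂ z)).card ≤ k → h x = 0 := by
      intro k
      induction k with
      | zero =>
        intro x hx hcard
        have hemp : L.filter (fun z => x ⊂ z) = ∅ :=
          Finset.card_eq_zero.1 (Nat.le_zero.1 hcard)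
        have hsplit : L.filter (fun z => x ⊆ z) = insert x (L.filter (fun z => x ⊂ z)) := by
          ext z
          simp only [Finset.mem_filter, Finset.mem_insert]
          constructor
          · rintro ⟨hz, hxz⟩
            rcases eq_or_ne z x with rfl | hne
            · exact Or.inl rfl
            · exact Or.inr ⟨hz, hxz.ssubset_of_ne hne.symm⟩
          · rintro (rfl | ⟨hz, hxz⟩)
            · exact ⟨hx, subset_rfl⟩
            · exact ⟨hz, hxz.subset⟩
        have := hsum x hx
        rw [hsplit, hemp] at this
        simpa using this
      | succ k ih =>
        intro x hx hcard
        have hnotmem : x ∉ L.filter (fun z => x ⊂ z) := by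
          simp only [Finset.mem_filter]
          rintro ⟨_, hc⟩
          exact hc.ne rfl
        have hsplit : L.filter (fun z => x ⊆ z) = insert x (L.filter (fun z => x ⊂ z)) := by
          ext z
          simp only [Finset.mem_filter, Finset.mem_insert]
          constructor
          · rintro ⟨hz, hxz⟩
            rcases eq_or_ne z x with rfl | hne
            · exact Or.inl rfl
            · exact Or.inr ⟨hz, hxz.ssubset_of_ne hne.symm⟩
          · rintro (rfl | ⟨hz, hxz⟩)
            · exact ⟨hx, subset_rfl⟩
            · exact ⟨hz, hxz.subset⟩
        have hrec := hsum x hx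
        rw [hsplit, Finset.sum_insert hnotmem] at hrec
        have hzero : ∑ z ∈ L.filter (fun z => x ⊂ z), h z = 0 := by
          refine Finset.sum_eq_zero fun z hz => ?_
          have hz' := Finset.mem_filter.1 hz
          refine ih z hz'.1 ?_
          have hlt : (L.filter (fun w => z ⊂ w)).card < (L.filter (fun w => x ⊂ w)).card := by
            refine Finset.card_lt_card ?_
            refine (Finset.ssubset_iff_of_subset ?_).2 ⟨z, hz, ?_⟩
            · intro w hw
              have hw' := Finset.mem_filter.1 hw
              exact Finset.mem_filter.2 ⟨hw'.1, hz'.2.trans hw'.2⟩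
            · simp only [Finset.mem_filter]
              rintro ⟨_, hc⟩
              exact hc.ne rfl
          omega
        rw [hzero, add_zero] at hrec
        exact hrec
    intro x hx
    have := key (L.filter (fun z => x ⊂ z)).card x hx le_rfl
    rw [hh] at this
    exact sub_eq_zero.1 this
  rw [hRHS]
  exact Finset.sum_congr rfl fun x hx => by rw [huniq x hx]
end

section
/- Let f₁,…,f_k: ℝⁿ → ℝ be affine-linear functions, g a degree-two polynomial with g(x) > 0 for all x, of the form g(x) = ∑(x_i−a_i)² + (∑b_i x_i)² + 1, and let u₁,…,u_k, v > 0 with 2v > ∑u_i. Then ψ(x) = ∑ u_i log|f_i(x)| − v log|g(x)| tends to −∞ both as x approaches the zero set of any f_i and as ‖x‖ → ∞. -/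
open Filter Topology Bornology Real

/-- Let `f₁,…,f_k : ℝⁿ → ℝ` be affine-linear functions, let
`g(x) = ∑(x_i−a_i)² + (∑ b_i x_i)² + 1` (a degree-two polynomial with `g(x) > 0` for all
`x`), and let `u₁,…,u_k, v > 0` with `2v > ∑ u_i`. Then
`ψ(x) = ∑ u_i log|f_i(x)| − v log|g(x)|` tends to `−∞` both as `x` approaches the zero set
of any `f_i` (staying off the zero sets) and as `‖x‖ → ∞`. -/
theorem psi_tendsto_atBot (n k : ℕ)
    (f : Fin k → (EuclideanSpace ℝ (Fin n) →ᵃ[ℝ] ℝ))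
    (a b : Fin n → ℝ) (u : Fin k → ℝ) (v : ℝ)
    (hu : ∀ i, 0 < u i) (hv : 0 < v) (h2v : ∑ i, u i < 2 * v) :
    let g : EuclideanSpace ℝ (Fin n) → ℝ :=
      fun x => (∑ i, (x i - a i) ^ 2) + (∑ i, b i * x i) ^ 2 + 1
    let Z : Set (EuclideanSpace ℝ (Fin n)) := {x | ∃ i, f i x = 0}
    let ψ : EuclideanSpace ℝ (Fin n) → ℝ :=
      fun x => (∑ i, u i * Real.log |f i x|) - v * Real.log |g x|
    (∀ x₀ ∈ Z, Tendsto ψ (nhdsWithin x₀ Zᶜ) atBot) ∧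
    Tendsto ψ (Bornology.cobounded (EuclideanSpace ℝ (Fin n)) ⊓ Filter.principal Zᶜ)
      atBot := by
  intro g Z ψ
  have hg1 : ∀ x, (1:ℝ) ≤ g x := by
    intro x
    have h1 : (0:ℝ) ≤ ∑ i, (x i - a i) ^ 2 := by positivity
    have h2 : (0:ℝ) ≤ (∑ i, b i * x i) ^ 2 := by positivity
    simp only [g]; linarith
  have hgabs : ∀ x, |g x| = g x := fun x => abs_of_pos (lt_of_lt_of_le one_pos (hg1 x))
  have hlogg : ∀ x, 0 ≤ Real.log (g x) := fun x => Real.log_nonneg (hg1 x)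
  constructor
  · -- Part 1: near a zero of some f i
    rintro x₀ ⟨i₀, hi₀⟩
    have hcont : ∀ i : Fin k, Tendsto (fun x => f i x) (𝓝[Zᶜ] x₀) (𝓝 (f i x₀)) := by
      intro i
      exact ((f i).continuous_of_finiteDimensional.tendsto x₀).mono_left nhdsWithin_le_nhds
    -- the distinguished term tends to -∞
    have hmain : Tendsto (fun x => u i₀ * Real.log |f i₀ x|) (𝓝[Zᶜ] x₀) atBot := by
      have h0 : Tendsto (fun x => f i₀ x) (𝓝[Zᶜ] x₀) (𝓝[≠] (0:ℝ)) := by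
        rw [tendsto_nhdsWithin_iff]
        refine ⟨by simpa [hi₀] using hcont i₀, ?_⟩
        exact eventually_nhdsWithin_of_forall fun x hx => fun h0 => hx ⟨i₀, h0⟩
      have h1 : Tendsto (fun x => Real.log |f i₀ x|) (𝓝[Zᶜ] x₀) atBot :=
        (Real.tendsto_log_nhdsNE_zero.comp h0).congr fun x => (Real.log_abs _).symm
      exact h1.const_mul_atBot (hu i₀)
    -- every other term is eventually bounded above
    have hb : ∀ i : Fin k, ∃ c : ℝ, ∀ᶠ x in 𝓝[Zᶜ] x₀, u i * Real.log |f i x| ≤ c := by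
      intro i
      by_cases hz : f i x₀ = 0
      · have h0 : Tendsto (fun x => f i x) (𝓝[Zᶜ] x₀) (𝓝[≠] (0:ℝ)) := by
          rw [tendsto_nhdsWithin_iff]
          refine ⟨by simpa [hz] using hcont i, ?_⟩
          exact eventually_nhdsWithin_of_forall fun x hx => fun h0 => hx ⟨i, h0⟩
        have h1 : Tendsto (fun x => Real.log |f i x|) (𝓝[Zᶜ] x₀) atBot :=
          (Real.tendsto_log_nhdsNE_zero.comp h0).congr fun x => (Real.log_abs _).symm
        have hT := h1.const_mul_atBot (hu i)
        exact ⟨0, hT.eventually (eventually_le_atBot 0)⟩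
      · have hlog : Tendsto (fun x => u i * Real.log |f i x|) (𝓝[Zᶜ] x₀)
            (𝓝 (u i * Real.log |f i x₀|)) := by
          have habs : Tendsto (fun x => |f i x|) (𝓝[Zᶜ] x₀) (𝓝 |f i x₀|) :=
            (continuous_abs.tendsto _).comp (hcont i)
          have hlc : ContinuousAt Real.log |f i x₀| :=
            Real.continuousAt_log (by simpa using hz)
          exact (hlc.tendsto.comp habs).const_mul _
        exact ⟨u i * Real.log |f i x₀| + 1,
          hlog.eventually_le_const (lt_add_one _)⟩
    choose c hc using hb
    set C : ℝ := ∑ i ∈ Finset.univ.erase i₀, c i with hC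
    have hev : ∀ᶠ x in 𝓝[Zᶜ] x₀, ψ x ≤ u i₀ * Real.log |f i₀ x| + C := by
      have hall : ∀ᶠ x in 𝓝[Zᶜ] x₀,
          ∀ i ∈ Finset.univ.erase i₀, u i * Real.log |f i x| ≤ c i :=
        (Finset.univ.erase i₀).eventually_all.2 fun i _ => hc i
      filter_upwards [hall] with x hx
      have h1 : ψ x ≤ ∑ i, u i * Real.log |f i x| := by
        have : 0 ≤ v * Real.log |g x| := by
          rw [hgabs x]; exact mul_nonneg hv.le (hlogg x)
        simp only [ψ]; linarith
      have h2 : (∑ i, u i * Real.log |f i x|)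
          = u i₀ * Real.log |f i₀ x| + ∑ i ∈ Finset.univ.erase i₀, u i * Real.log |f i x| :=
        (Finset.add_sum_erase _ _ (Finset.mem_univ i₀)).symm
      have h3 : ∑ i ∈ Finset.univ.erase i₀, u i * Real.log |f i x| ≤ C :=
        Finset.sum_le_sum hx
      linarith
    exact tendsto_atBot_mono' _ hev (tendsto_atBot_add_const_right _ C hmain)
  · -- Part 2: at infinity
    set A : EuclideanSpace ℝ (Fin n) := (WithLp.equiv 2 _).symm a with hA
    have hnormA : ∀ x : EuclideanSpace ℝ (Fin n), ‖x - A‖ ^ 2 = ∑ i, (x i - a i) ^ 2 := by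
      intro x
      rw [EuclideanSpace.norm_eq, Real.sq_sqrt (by positivity)]
      simp [A, sq_abs]
    set D : ℝ := 2 * (1 + ‖A‖) ^ 2 with hD
    have hD0 : 0 < D := by positivity
    have hgx : ∀ x : EuclideanSpace ℝ (Fin n), (1 + ‖x‖) ^ 2 ≤ D * g x := by
      intro x
      have h1 : ‖x‖ ≤ ‖x - A‖ + ‖A‖ := by
        simpa using norm_add_le (x - A) A
      have h2 : ‖x - A‖ ^ 2 + 1 ≤ g x := by
        have : (0:ℝ) ≤ (∑ i, b i * x i) ^ 2 := by positivity
        have := hnormA x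
        simp only [g]; linarith
      have h3 : (0:ℝ) ≤ ‖x - A‖ := norm_nonneg _
      have h4 : (0:ℝ) ≤ ‖A‖ := norm_nonneg _
      have e1 : 1 + ‖x‖ ≤ (1 + ‖A‖) * (1 + ‖x - A‖) := by nlinarith [mul_nonneg h4 h3]
      have e2 : (1 + ‖x‖) ^ 2 ≤ ((1 + ‖A‖) * (1 + ‖x - A‖)) ^ 2 :=
        pow_le_pow_left₀ (by positivity) e1 2
      have e3 : (1 + ‖x - A‖) ^ 2 ≤ 2 * (‖x - A‖ ^ 2 + 1) := by
        nlinarith [sq_nonneg (‖x - A‖ - 1)]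
      calc (1 + ‖x‖) ^ 2 ≤ (1 + ‖A‖) ^ 2 * (1 + ‖x - A‖) ^ 2 := by
            rw [← mul_pow]; exact e2
        _ ≤ (1 + ‖A‖) ^ 2 * (2 * (‖x - A‖ ^ 2 + 1)) :=
            mul_le_mul_of_nonneg_left e3 (by positivity)
        _ ≤ (1 + ‖A‖) ^ 2 * (2 * g x) :=
            mul_le_mul_of_nonneg_left (by linarith) (by positivity)
        _ = D * g x := by rw [hD]; ring
    have hglog : ∀ x : EuclideanSpace ℝ (Fin n),
        2 * Real.log (1 + ‖x‖) ≤ Real.log D + Real.log (g x) := by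
      intro x
      have hx1 : (0:ℝ) < 1 + ‖x‖ := by positivity
      have hg0 : (0:ℝ) < g x := lt_of_lt_of_le one_pos (hg1 x)
      calc 2 * Real.log (1 + ‖x‖) = Real.log ((1 + ‖x‖) ^ 2) := by
            rw [Real.log_pow]; push_cast; ring
        _ ≤ Real.log (D * g x) := Real.log_le_log (by positivity) (hgx x)
        _ = Real.log D + Real.log (g x) := Real.log_mul hD0.ne' hg0.ne'
    -- coefficient bounds for the affine maps
    set C : Fin k → ℝ := fun i => ‖(f i).linear.toContinuousLinearMap‖ + |f i 0| with hCdef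
    have hC0 : ∀ i, 0 ≤ C i := fun i => add_nonneg (norm_nonneg _) (abs_nonneg _)
    have hfb : ∀ i (x : EuclideanSpace ℝ (Fin n)), |f i x| ≤ (C i + 1) * (1 + ‖x‖) := by
      intro i x
      have hdec : f i x = (f i).linear x + f i 0 := by
        have := (f i).map_vadd 0 x; simpa using this
      have h1 : |(f i).linear x| ≤ ‖(f i).linear.toContinuousLinearMap‖ * ‖x‖ := by
        simpa using (f i).linear.toContinuousLinearMap.le_opNorm x
      have h2 : |f i x| ≤ |(f i).linear x| + |f i 0| := by
        rw [hdec]; exact abs_add_le _ _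
      have hx0 : (0:ℝ) ≤ ‖x‖ := norm_nonneg _
      have hn0 : (0:ℝ) ≤ ‖(f i).linear.toContinuousLinearMap‖ := norm_nonneg _
      have ha0 : (0:ℝ) ≤ |f i 0| := abs_nonneg _
      simp only [hCdef]
      nlinarith
    set K : ℝ := (∑ i, u i * Real.log (C i + 1)) + v * Real.log D with hK
    set ε : ℝ := 2 * v - ∑ i, u i with hε
    have hε0 : 0 < ε := by simp only [hε]; linarith
    have hbound : ∀ x ∈ Zᶜ, ψ x ≤ K - ε * Real.log (1 + ‖x‖) := by
      intro x hx
      have hx1 : (0:ℝ) < 1 + ‖x‖ := by positivity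
      have hsum : ∀ i, u i * Real.log |f i x| ≤
          u i * (Real.log (C i + 1) + Real.log (1 + ‖x‖)) := by
        intro i
        have hne : f i x ≠ 0 := fun h => hx ⟨i, h⟩
        have hpos : (0:ℝ) < |f i x| := abs_pos.2 hne
        have hlog : Real.log |f i x| ≤ Real.log (C i + 1) + Real.log (1 + ‖x‖) := by
          calc Real.log |f i x| ≤ Real.log ((C i + 1) * (1 + ‖x‖)) :=
                Real.log_le_log hpos (hfb i x)
            _ = Real.log (C i + 1) + Real.log (1 + ‖x‖) := by
                rw [Real.log_mul (by positivity) hx1.ne']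
        exact mul_le_mul_of_nonneg_left hlog (hu i).le
      have hS : (∑ i, u i * Real.log |f i x|)
          ≤ (∑ i, u i * Real.log (C i + 1)) + (∑ i, u i) * Real.log (1 + ‖x‖) := by
        calc (∑ i, u i * Real.log |f i x|)
            ≤ ∑ i, u i * (Real.log (C i + 1) + Real.log (1 + ‖x‖)) :=
              Finset.sum_le_sum fun i _ => hsum i
          _ = (∑ i, u i * Real.log (C i + 1)) + (∑ i, u i) * Real.log (1 + ‖x‖) := by
              simp_rw [mul_add]
              rw [Finset.sum_add_distrib, ← Finset.sum_mul]
      have hG : - (v * Real.log |g x|) ≤ v * Real.log D - 2 * v * Real.log (1 + ‖x‖) := by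
        rw [hgabs x]
        have := hglog x
        nlinarith
      simp only [ψ]
      rw [hK, hε]
      nlinarith [hS, hG]
    have htail : Tendsto (fun t : ℝ => K - ε * Real.log (1 + t)) atTop atBot := by
      have h1 : Tendsto (fun t : ℝ => 1 + t) atTop atTop :=
        tendsto_atTop_add_const_left _ 1 tendsto_id
      have h2 : Tendsto (fun t : ℝ => ε * Real.log (1 + t)) atTop atTop :=
        (Real.tendsto_log_atTop.comp h1).const_mul_atTop hε0
      have h3 : Tendsto (fun t : ℝ => -(ε * Real.log (1 + t))) atTop atBot :=
        tendsto_neg_atTop_atBot.comp h2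
      have := tendsto_atBot_add_const_left atTop K h3
      simpa [sub_eq_add_neg] using this
    have hcomp : Tendsto (fun x : EuclideanSpace ℝ (Fin n) => K - ε * Real.log (1 + ‖x‖))
        (cobounded (EuclideanSpace ℝ (Fin n)) ⊓ 𝓟 Zᶜ) atBot :=
      (htail.comp tendsto_norm_cobounded_atTop).mono_left inf_le_left
    refine tendsto_atBot_mono' _ ?_ hcomp
    exact eventually_inf_principal.2 (Eventually.of_forall hbound)
end
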